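/- arXiv:2504.08151 — 2 statements merged into one kernel-verified Lean document; each statement's English description precedes it below -/
import Mathlib

section
/- Let X₁, X₂, … be i.i.d. real random variables with continuous strictly increasing CDF F, and let ω = F⁻¹(τ) be the τ-th quantile for τ ∈ (0,1). Then the empirical τ-th quantile ω̂ₙ of the first n samples converges almost surely to ω as n → ∞. -/
open Set MeasureTheory ProbabilityTheory Filter

/-- Empirical `τ`-th quantile of the first `n` samples `X 0, …, X (n-1)`:
`inf {x | F̂ₙ(x) ≥ τ}` where `F̂ₙ` is the empirical CDF. -/
noncomputable def empiricalQuantile (τ : ℝ) (n : ℕ) (X : ℕ → ℝ) : ℝ :=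
  sInf {x : ℝ | τ ≤ (((Finset.range n).filter fun i => X i ≤ x).card : ℝ) / n}

/-- SLLN for the empirical CDF at a fixed point `c`. -/
lemma ecdf_tendsto
    {Ω : Type*} [MeasureSpace Ω] [IsProbabilityMeasure (ℙ : Measure Ω)]
    (μ : Measure ℝ) [IsProbabilityMeasure μ]
    (X : ℕ → Ω → ℝ)
    (hX_meas : ∀ i, Measurable (X i))
    (hX_indep : iIndepFun X ℙ)
    (hX_law : ∀ i, Measure.map (X i) ℙ = μ) (c : ℝ) :
    ∀ᵐ ω ∂ℙ, Tendsto
      (fun n => (((Finset.range n).filter fun i => X i ω ≤ c).card : ℝ) / n)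
      atTop (nhds ((μ (Iic c)).toReal)) := by
  set g : ℝ → ℝ := (Iic c).indicator (fun _ => 1) with hg
  have hgm : Measurable g := measurable_const.indicator measurableSet_Iic
  set Y : ℕ → Ω → ℝ := fun i => g ∘ X i with hY
  have hYindep : Pairwise (Function.onFun (IndepFun · · ℙ) Y) := by
    intro i j hij
    exact (hX_indep.comp (fun _ => g) (fun _ => hgm)).indepFun hij
  have hYident : ∀ i, IdentDistrib (Y i) (Y 0) ℙ ℙ := by
    intro i
    have : IdentDistrib (X i) (X 0) ℙ ℙ :=
      ⟨(hX_meas i).aemeasurable, (hX_meas 0).aemeasurable, by rw [hX_law, hX_law]⟩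
    exact this.comp hgm
  have hYint : Integrable (Y 0) ℙ := by
    have : Y 0 = (X 0 ⁻¹' Iic c).indicator (fun _ => (1:ℝ)) := by
      ext ω; simp [hY, hg, Set.indicator, Set.mem_preimage]
    rw [this]
    exact (integrable_const (1:ℝ)).indicator ((hX_meas 0) measurableSet_Iic)
  have hmean : ℙ[Y 0] = (μ (Iic c)).toReal := by
    have h1 : ℙ[Y 0] = ∫ x, g x ∂(Measure.map (X 0) ℙ) :=
      (integral_map (hX_meas 0).aemeasurable hgm.aestronglyMeasurable).symm
    rw [h1, hX_law, hg, integral_indicator measurableSet_Iic]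
    simp [Measure.real]
  have := strong_law_ae_real Y hYint hYindep hYident
  rw [hmean] at this
  filter_upwards [this] with ω hω
  convert hω using 2 with n
  congr 1
  rw [Finset.card_filter]
  push_cast
  refine Finset.sum_congr rfl fun i _ => ?_
  by_cases h : X i ω ≤ c <;> simp [hY, hg, Set.indicator, h]

lemma empiricalQuantile_mem_Icc {τ : ℝ} {n : ℕ} {X : ℕ → ℝ} {a b : ℝ}
    (ha : (((Finset.range n).filter fun i => X i ≤ a).card : ℝ) / n < τ)
    (hb : τ ≤ (((Finset.range n).filter fun i => X i ≤ b).card : ℝ) / n) :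
    empiricalQuantile τ n X ∈ Icc a b := by
  have hmono : Monotone (fun x => (((Finset.range n).filter fun i => X i ≤ x).card : ℝ) / n) := by
    intro x y hxy
    have hc : (((Finset.range n).filter fun i => X i ≤ x).card : ℝ) ≤
        (((Finset.range n).filter fun i => X i ≤ y).card : ℝ) := by
      exact_mod_cast Finset.card_le_card
        (Finset.monotone_filter_right (Finset.range n) fun i _ hi => le_trans hi hxy)
    simp only [div_eq_mul_inv]
    exact mul_le_mul_of_nonneg_right hc (by positivity)
  set S := {x : ℝ | τ ≤ (((Finset.range n).filter fun i => X i ≤ x).card : ℝ) / n}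
  have hbS : b ∈ S := hb
  have hlb : ∀ x ∈ S, a ≤ x := fun x hx => by
    by_contra h
    exact absurd (le_trans hx (hmono (le_of_not_ge h))) (not_le.2 ha)
  exact ⟨le_csInf ⟨b, hbS⟩ hlb, csInf_le ⟨a, hlb⟩ hbS⟩

/-- for i.i.d. samples with continuous strictly increasing CDF `F`,
the empirical `τ`-th quantile converges almost surely to the true quantile
`ω = F⁻¹(τ)` (the unique point with `F ω = τ`). -/
theorem empiricalQuantile_tendsto_ae
    {Ω : Type*} [MeasureSpace Ω] [IsProbabilityMeasure (ℙ : Measure Ω)]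
    (μ : Measure ℝ) [IsProbabilityMeasure μ]
    (X : ℕ → Ω → ℝ)
    (hX_meas : ∀ i, Measurable (X i))
    (hX_indep : iIndepFun X ℙ)
    (hX_law : ∀ i, Measure.map (X i) ℙ = μ)
    (F : ℝ → ℝ) (hF : ∀ x, F x = (μ (Iic x)).toReal)
    (hF_cont : Continuous F) (hF_mono : StrictMono F)
    (τ : ℝ) (hτ : τ ∈ Ioo (0:ℝ) 1)
    (ωstar : ℝ) (hωstar : F ωstar = τ) :
    ∀ᵐ ω ∂ℙ, Tendsto (fun n => empiricalQuantile τ n (fun i => X i ω))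
      atTop (nhds ωstar) := by
  have key : ∀ᵐ ω ∂ℙ, ∀ k : ℕ,
      (Tendsto (fun n => (((Finset.range n).filter
          fun i => X i ω ≤ ωstar - 1/(k+1)).card : ℝ) / n)
        atTop (nhds (F (ωstar - 1/(k+1))))) ∧
      (Tendsto (fun n => (((Finset.range n).filter
          fun i => X i ω ≤ ωstar + 1/(k+1)).card : ℝ) / n)
        atTop (nhds (F (ωstar + 1/(k+1))))) := by
    rw [ae_all_iff]
    intro k
    have h1 := ecdf_tendsto μ X hX_meas hX_indep hX_law (ωstar - 1/(k+1))
    have h2 := ecdf_tendsto μ X hX_meas hX_indep hX_law (ωstar + 1/(k+1))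
    filter_upwards [h1, h2] with ω hω1 hω2
    rw [hF, hF]
    exact ⟨hω1, hω2⟩
  filter_upwards [key] with ω hω
  rw [Metric.tendsto_atTop]
  intro ε hε
  obtain ⟨k, hk⟩ := exists_nat_one_div_lt hε
  set δ : ℝ := 1/(k+1) with hδ
  have hδpos : 0 < δ := by positivity
  obtain ⟨h1, h2⟩ := hω k
  have hFa : F (ωstar - δ) < τ := by
    rw [← hωstar]; exact hF_mono (by linarith)
  have hFb : τ < F (ωstar + δ) := by
    rw [← hωstar]; exact hF_mono (by linarith)
  have e1 : ∀ᶠ n in atTop, (((Finset.range n).filter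
      fun i => X i ω ≤ ωstar - δ).card : ℝ) / n < τ :=
    h1.eventually_lt_const hFa
  have e2 : ∀ᶠ n in atTop, τ ≤ (((Finset.range n).filter
      fun i => X i ω ≤ ωstar + δ).card : ℝ) / n :=
    (h2.eventually_const_lt hFb).mono fun n h => h.le
  obtain ⟨N, hN⟩ := (e1.and e2).exists_forall_of_atTop
  refine ⟨N, fun n hn => ?_⟩
  obtain ⟨hna, hnb⟩ := hN n hn
  have := empiricalQuantile_mem_Icc hna hnb
  simp only [mem_Icc] at this
  rw [Real.dist_eq, abs_lt]
  constructor <;> linarith [this.1, this.2]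
end

section
/- Let D and D̃ be two distributions over X × {0,1} and H a hypothesis class. For any h ∈ H, |err_D(h) − err_{D̃}(h)| ≤ (1/2) d_{HΔH}(D̃, D) + c, where d_{HΔH} is the HΔH-divergence between the marginals and c = min_{h' ∈ H} (err_D(h') + err_{D̃}(h')). (Domain adaptation bound of Ben-David et al.) -/
open MeasureTheory Set

lemma tri_aux {β : Type*} [MeasurableSpace β] (μ : Measure β) [IsProbabilityMeasure μ]
    {S T U : Set β} (hS : S ⊆ T ∪ U) :
    (μ S).toReal ≤ (μ T).toReal + (μ U).toReal := by
  have h1 : μ S ≤ μ T + μ U := (measure_mono hS).trans (measure_union_le T U)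
  have hT : μ T ≠ ⊤ := measure_ne_top μ T
  have hU : μ U ≠ ⊤ := measure_ne_top μ U
  calc (μ S).toReal ≤ (μ T + μ U).toReal :=
        ENNReal.toReal_mono (by simp [ENNReal.add_ne_top, hT, hU]) h1
    _ = (μ T).toReal + (μ U).toReal := ENNReal.toReal_add hT hU

/-- Ben-David et al. domain adaptation bound: for distributions `D`, `D̃`
over `α × Bool` and a hypothesis class `H`, every `h ∈ H` satisfies
`|err_D(h) − err_{D̃}(h)| ≤ (1/2) d_{HΔH}(D̃, D) + c`, where `d_{HΔH}` is the
`HΔH`-divergence between the marginals and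
`c = min_{h' ∈ H} (err_D(h') + err_{D̃}(h'))`. -/
theorem domain_adaptation_bound
    {α : Type*} [MeasurableSpace α]
    (D Dt : Measure (α × Bool)) [IsProbabilityMeasure D] [IsProbabilityMeasure Dt]
    (Hcl : Set (α → Bool)) (hHcl_meas : ∀ h ∈ Hcl, Measurable h)
    (err : Measure (α × Bool) → (α → Bool) → ℝ)
    (herr : ∀ μ h, err μ h = (μ {p | h p.1 ≠ p.2}).toReal)
    (dHH : ℝ)
    (hdHH : dHH = 2 * sSup {r : ℝ | ∃ h ∈ Hcl, ∃ h' ∈ Hcl,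
      r = |((Dt.map Prod.fst) {x | h x ≠ h' x}).toReal -
            ((D.map Prod.fst) {x | h x ≠ h' x}).toReal|})
    (c : ℝ) (hc : c = sInf {r : ℝ | ∃ h' ∈ Hcl, r = err D h' + err Dt h'})
    (h : α → Bool) (hh : h ∈ Hcl) :
    |err D h - err Dt h| ≤ (1 / 2) * dHH + c := by
  set S : Set ℝ := {r : ℝ | ∃ h ∈ Hcl, ∃ h' ∈ Hcl,
      r = |((Dt.map Prod.fst) {x | h x ≠ h' x}).toReal -
            ((D.map Prod.fst) {x | h x ≠ h' x}).toReal|} with hS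
  -- S is bounded above by 1
  have hbdd : BddAbove S := by
    refine ⟨1, ?_⟩
    rintro r ⟨h1, -, h2, -, rfl⟩
    have hx1 : ((Dt.map Prod.fst) {x | h1 x ≠ h2 x}).toReal ≤ 1 := by
      refine ENNReal.toReal_le_of_le_ofReal zero_le_one ?_
      simpa using (prob_le_one (μ := Dt.map Prod.fst))
    have hx2 : (0:ℝ) ≤ ((D.map Prod.fst) {x | h1 x ≠ h2 x}).toReal := ENNReal.toReal_nonneg
    have hx3 : ((D.map Prod.fst) {x | h1 x ≠ h2 x}).toReal ≤ 1 := by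
      refine ENNReal.toReal_le_of_le_ofReal zero_le_one ?_
      simpa using (prob_le_one (μ := D.map Prod.fst))
    have hx4 : (0:ℝ) ≤ ((Dt.map Prod.fst) {x | h1 x ≠ h2 x}).toReal := ENNReal.toReal_nonneg
    rw [abs_le]
    constructor <;> linarith
  -- main step: for every h' ∈ Hcl, the claimed inequality with err sums
  have key : ∀ h' ∈ Hcl, |err D h - err Dt h| ≤ (1/2) * dHH + (err D h' + err Dt h') := by
    intro h' hh'
    have hmh := hHcl_meas h hh
    have hmh' := hHcl_meas h' hh'
    have hmeas : MeasurableSet {x | h x ≠ h' x} := by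
      have : MeasurableSet {x | h x = h' x} := measurableSet_eq_fun hmh hmh'
      simpa [Set.compl_setOf] using this.compl
    -- marginal values equal joint values
    have hmapD : ((D.map Prod.fst) {x | h x ≠ h' x}).toReal
        = (D {p | h p.1 ≠ h' p.1}).toReal := by
      rw [Measure.map_apply measurable_fst hmeas]; rfl
    have hmapDt : ((Dt.map Prod.fst) {x | h x ≠ h' x}).toReal
        = (Dt {p | h p.1 ≠ h' p.1}).toReal := by
      rw [Measure.map_apply measurable_fst hmeas]; rfl
    set AD : ℝ := (D {p : α × Bool | h p.1 ≠ h' p.1}).toReal with hAD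
    set ADt : ℝ := (Dt {p : α × Bool | h p.1 ≠ h' p.1}).toReal with hADt
    -- |ADt - AD| ≤ dHH / 2
    have hmem : |ADt - AD| ∈ S := by
      refine ⟨h, hh, h', hh', ?_⟩
      rw [hmapD, hmapDt]
    have hsup : |ADt - AD| ≤ sSup S := le_csSup hbdd hmem
    have hdiff : |ADt - AD| ≤ (1/2) * dHH := by rw [hdHH]; linarith
    -- triangle inequalities
    have hincl1 : {p : α × Bool | h p.1 ≠ p.2}
        ⊆ {p : α × Bool | h' p.1 ≠ p.2} ∪ {p : α × Bool | h p.1 ≠ h' p.1} := by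
      intro p hp
      by_cases hc1 : h' p.1 = p.2
      · right; simp only [Set.mem_setOf_eq]; intro hcon; exact hp (hcon.trans hc1)
      · left; exact hc1
    have hincl2 : {p : α × Bool | h p.1 ≠ h' p.1}
        ⊆ {p : α × Bool | h p.1 ≠ p.2} ∪ {p : α × Bool | h' p.1 ≠ p.2} := by
      intro p hp
      by_cases hc1 : h p.1 = p.2
      · right; simp only [Set.mem_setOf_eq]; intro hcon; exact hp (hc1.trans hcon.symm)
      · left; exact hc1
    have t1 : err D h ≤ err D h' + AD := by
      rw [herr, herr]; exact tri_aux D hincl1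
    have t2 : err Dt h ≤ err Dt h' + ADt := by
      rw [herr, herr]; exact tri_aux Dt hincl1
    have t3 : AD ≤ err D h + err D h' := by
      rw [herr, herr]; exact tri_aux D hincl2
    have t4 : ADt ≤ err Dt h + err Dt h' := by
      rw [herr, herr]; exact tri_aux Dt hincl2
    rw [abs_le] at hdiff ⊢
    constructor <;> nlinarith [hdiff.1, hdiff.2]
  -- conclude via sInf
  have hle : |err D h - err Dt h| - (1/2) * dHH ≤ c := by
    rw [hc]
    refine le_csInf ⟨err D h + err Dt h, h, hh, rfl⟩ ?_
    rintro b ⟨h', hh', rfl⟩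
    linarith [key h' hh']
  linarith
end
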